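/- Let T be a tree and let v be a new leaf attached to T. Then mp(T+v) ≥ mp(T)/2, and likewise for a leaf v of T, mp(T−v) ≥ mp(T)/2. -/

import Mathlib

/-!
Adding a pendant vertex at `x`, or deleting a leaf `v` with neighbour `u`, changes the degree of
exactly one remaining vertex, and by one: `x` gains, `u` loses. Read a degree monotone path in the
direction of increasing degrees and cut it at that vertex. Both pieces stay degree monotone in the
new graph: the piece ending at `x` and the piece after it, respectively the piece before `u` and
the piece starting at `u`. One of them has at least half of the vertices. A leaf can only lie on a
path as an endpoint: at the start it is dropped, at the end it bounds all degrees on the path by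
one, so the path has at most two vertices.
-/

open SimpleGraph

/-- `mp G` is the maximum number of vertices of a degree monotone path in `G`. -/
noncomputable def mp {V : Type*} [Fintype V] (G : SimpleGraph V) : ℕ :=
  letI : DecidableEq V := Classical.decEq _
  letI : DecidableRel G.Adj := Classical.decRel _
  sSup {n : ℕ | ∃ (u v : V) (p : G.Walk u v), p.IsPath ∧
    (List.Chain' (· ≤ ·) (p.support.map (fun x => G.degree x)) ∨
     List.Chain' (· ≥ ·) (p.support.map (fun x => G.degree x))) ∧ p.support.length = n}

/-- The graph obtained from `G` by adding a new vertex `none` joined to the vertices in `S`. -/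
def addVertex {V : Type*} (G : SimpleGraph V) (S : Set V) : SimpleGraph (Option V) :=
  SimpleGraph.fromRel (fun a b =>
    (∃ x y, a = some x ∧ b = some y ∧ G.Adj x y) ∨ (a = none ∧ ∃ x ∈ S, b = some x))

section MonotonePaths

open Finset

namespace List

theorem IsChain.map_cons_of_eqOn {α β : Type*} {R : β → β → Prop} [IsTrans β R]
    {f g : α → β} {x : α} {l : List α} (h : ((x :: l).map f).IsChain R)
    (hl : ∀ y ∈ l, g y = f y) (hx : R (g x) (f x)) : ((x :: l).map g).IsChain R := by
  rw [map_cons, map_congr_left hl] at *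
  exact h.imp_head fun h' => _root_.trans hx h'

theorem IsChain.map_append_singleton_of_eqOn {α β : Type*} {R : β → β → Prop} [IsTrans β R]
    {f g : α → β} {x : α} {l : List α} (h : ((l ++ [x]).map f).IsChain R)
    (hl : ∀ y ∈ l, g y = f y) (hx : R (f x) (g x)) : ((l ++ [x]).map g).IsChain R := by
  rw [← isChain_reverse, ← map_reverse, reverse_append] at h ⊢
  exact h.map_cons_of_eqOn (R := fun a b => R b a) (by simpa using hl) hx

end List

variable {V : Type*} {G : SimpleGraph V}

/- `mp` is phrased with the deprecated `List.Chain'` and with classical decidability instances;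
`convert` matches its degrees with those of the instance at hand. -/
set_option linter.deprecated false in
theorem length_support_le_mp [Fintype V] [DecidableRel G.Adj] {a b : V} {p : G.Walk a b}
    (hp : p.IsPath)
    (h : (p.support.map (G.degree ·)).IsChain (· ≤ ·) ∨
      (p.support.map (G.degree ·)).IsChain (· ≥ ·)) :
    p.support.length ≤ mp G := by
  refine le_csSup ⟨Fintype.card V, ?_⟩ ⟨a, b, p, hp, by unfold List.Chain'; convert h, rfl⟩
  rintro _ ⟨_, _, q, hq, -, rfl⟩
  exact hq.support_nodup.length_le_card

set_option linter.deprecated false in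
theorem mp_le_of_forall [Fintype V] [DecidableRel G.Adj] {m : ℕ}
    (h : ∀ (a b : V) (p : G.Walk a b), p.IsPath →
      (p.support.map (G.degree ·)).IsChain (· ≤ ·) → p.support.length ≤ m) :
    mp G ≤ m := by
  refine csSup_le' ?_
  rintro _ ⟨a, b, p, hp, hc, rfl⟩
  unfold List.Chain' at hc
  rcases hc with hc | hc
  · exact h a b p hp (by convert hc)
  · simpa using h b a p.reverse hp.reverse <| by
      rw [Walk.support_reverse, List.map_reverse, List.isChain_reverse]; convert hc

theorem one_le_mp [Fintype V] [Nonempty V] (G : SimpleGraph V) : 1 ≤ mp G := by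
  classical
  inhabit V
  simpa using length_support_le_mp (G := G) (p := Walk.nil (u := default)) .nil (by simp)

namespace SimpleGraph.Walk

variable {u v : V} {p : G.Walk u v}

theorem IsPath.two_le_degree_getVert [G.LocallyFinite] (hp : p.IsPath) {i : ℕ} (h0 : i ≠ 0)
    (hi : i < p.length) : 2 ≤ G.degree (p.getVert i) := by
  rw [← hp.ncard_neighborSet_toSubgraph_internal_eq_two h0 hi, ← card_neighborSet_eq_degree,
    ← Nat.card_eq_fintype_card, Nat.card_coe_set_eq]
  exact Set.ncard_le_ncard (p.toSubgraph.neighborSet_subset _) (Set.toFinite _)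

theorem IsPath.eq_or_eq_of_degree_lt_two [G.LocallyFinite] (hp : p.IsPath) {w : V}
    (hw : w ∈ p.support) (hd : G.degree w < 2) : w = u ∨ w = v := by
  obtain ⟨i, rfl, hi⟩ := mem_support_iff_exists_getVert.mp hw
  rcases Nat.eq_zero_or_pos i with rfl | h0
  · exact .inl p.getVert_zero
  rcases hi.lt_or_eq with hi | rfl
  · exact absurd (hp.two_le_degree_getVert h0.ne' hi) (by omega)
  · exact .inr p.getVert_length

theorem IsPath.length_le_one_of_isChain_ge [G.LocallyFinite] (hp : p.IsPath)
    (hc : (p.support.map (G.degree ·)).IsChain (· ≥ ·)) (hu : G.degree u ≤ 1) :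
    p.length ≤ 1 := by
  by_contra! h
  have hsnd : G.degree (p.getVert 1) ≤ G.degree u := by
    rw [← cons_tail_support, List.map_cons] at hc
    exact hc.rel_cons <| List.mem_map_of_mem <|
      snd_mem_tail_support (not_nil_iff_lt_length.mpr (by omega))
  have := hp.two_le_degree_getVert one_ne_zero h
  omega

theorem IsPath.length_support_le_two_mul_of_eq_of_ne {β : Type*} {R : β → β → Prop}
    [IsTrans β R] {f g : V → β} {x : V} (hp : p.IsPath) (hfg : ∀ y ≠ x, g y = f y)
    (hx : R (f x) (g x))
    (hc : (p.support.map f).IsChain R) {m : ℕ}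
    (hm : ∀ (a b : V) (q : G.Walk a b), q.IsPath → q.support ⊆ p.support →
      (q.support.map g).IsChain R → q.support.length ≤ m) :
    p.support.length ≤ 2 * m := by
  classical
  have hfg' : ∀ {l : List V}, x ∉ l → ∀ y ∈ l, g y = f y :=
    fun hl y hy => hfg y (ne_of_mem_of_not_mem hy hl)
  by_cases hxp : x ∈ p.support
  swap
  · have := hm u v p hp (List.Subset.refl _) (by rwa [List.map_congr_left (hfg' hxp)])
    omega
  set A := p.takeUntil x hxp
  set D := p.dropUntil x hxp
  have hsupp : p.support = A.support ++ D.support.tail := by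
    rw [← support_append, take_spec]
  have hxA : x ∉ A.support.dropLast := by
    have hA := (hp.takeUntil hxp).support_nodup
    rw [← dropLast_support_concat] at hA
    exact fun hx' => (List.nodup_append.mp hA).2.2 x hx' x (List.mem_singleton_self x) rfl
  have hxD : x ∉ D.support.tail := by
    have hD := (hp.dropUntil hxp).support_nodup
    rw [← cons_tail_support] at hD
    exact (List.nodup_cons.mp hD).1
  have hA : A.support.length ≤ m := by
    refine hm _ _ A (hp.takeUntil hxp) (support_takeUntil_subset_support p hxp) ?_
    have hcA : (A.support.map f).IsChain R :=
      hc.prefix (by rw [hsupp, List.map_append]; exact List.prefix_append _ _)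
    rw [← dropLast_support_concat] at hcA ⊢
    exact hcA.map_append_singleton_of_eqOn (hfg' hxA) hx
  have hD : D.support.tail.length ≤ m := by
    by_cases hDn : D.Nil
    · simp [nil_iff_support_eq.mp hDn]
    rw [← support_tail_of_not_nil D hDn]
    refine hm _ _ D.tail (hp.dropUntil hxp).tail ?_ ?_
    · rw [support_tail_of_not_nil D hDn, hsupp]
      exact List.subset_append_right _ _
    · have hcD : (D.support.tail.map f).IsChain R :=
        hc.suffix (by rw [hsupp, List.map_append]; exact List.suffix_append _ _)
      rwa [support_tail_of_not_nil D hDn, List.map_congr_left (hfg' hxD)]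
  rw [hsupp, List.length_append]
  omega

end SimpleGraph.Walk

namespace SimpleGraph

theorem degree_eq_ncard_neighborSet (v : V) [Fintype (G.neighborSet v)] :
    G.degree v = (G.neighborSet v).ncard := by
  rw [← card_neighborSet_eq_degree, ← Nat.card_eq_fintype_card, Nat.card_coe_set_eq]

section addVertex

variable {S : Set V} {a b : V}

@[simp]
theorem addVertex_adj_some_some : (addVertex G S).Adj (some a) (some b) ↔ G.Adj a b := by
  simpa [addVertex, G.adj_comm b a] using fun h : G.Adj a b => h.ne

@[simp]
theorem addVertex_adj_some_none : (addVertex G S).Adj (some a) none ↔ a ∈ S := by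
  simp [addVertex]

def addVertexEmbedding (G : SimpleGraph V) (S : Set V) : G ↪g addVertex G S where
  toFun := some
  inj' := Option.some_injective V
  map_rel_iff' := addVertex_adj_some_some

theorem neighborSet_addVertex_some_of_notMem (ha : a ∉ S) :
    (addVertex G S).neighborSet (some a) = some '' G.neighborSet a := by
  ext (_ | b) <;> simp [ha]

theorem neighborSet_addVertex_some_of_mem (ha : a ∈ S) :
    (addVertex G S).neighborSet (some a) = insert none (some '' G.neighborSet a) := by
  ext (_ | b) <;> simp [ha]

theorem degree_addVertex_some_of_notMem [Fintype (G.neighborSet a)]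
    [Fintype ((addVertex G S).neighborSet (some a))] (ha : a ∉ S) :
    (addVertex G S).degree (some a) = G.degree a := by
  rw [degree_eq_ncard_neighborSet, degree_eq_ncard_neighborSet,
    neighborSet_addVertex_some_of_notMem ha,
    Set.ncard_image_of_injective _ (Option.some_injective V)]

theorem degree_addVertex_some_of_mem [Fintype (G.neighborSet a)]
    [Fintype ((addVertex G S).neighborSet (some a))] (ha : a ∈ S) :
    (addVertex G S).degree (some a) = G.degree a + 1 := by
  rw [degree_eq_ncard_neighborSet, degree_eq_ncard_neighborSet,
    neighborSet_addVertex_some_of_mem ha, Set.ncard_insert_of_notMem (by simp) (Set.toFinite _),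
    Set.ncard_image_of_injective _ (Option.some_injective V)]

end addVertex

theorem degree_induce_setOf_ne [Fintype V] [DecidableEq V] [DecidableRel G.Adj] {v : V}
    (y : {y : V | y ≠ v}) :
    (G.induce {y | y ≠ v}).degree y = #((G.neighborFinset y).erase v) := by
  rw [← card_neighborFinset_eq_degree, ← Finset.card_map, map_neighborFinset_induce]
  congr 1
  ext; simp [and_comm]

end SimpleGraph

theorem length_support_le_mp_of_embedding {W : Type*} [Fintype W] {H : SimpleGraph W}
    [DecidableRel H.Adj] (φ : G ↪g H) {a b : V} {p : G.Walk a b} (hp : p.IsPath)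
    (h : (p.support.map (H.degree <| φ ·)).IsChain (· ≤ ·) ∨
      (p.support.map (H.degree <| φ ·)).IsChain (· ≥ ·)) :
    p.support.length ≤ mp H := by
  have hdeg : (p.map φ.toHom).support.map (H.degree ·) = p.support.map (H.degree <| φ ·) := by
    rw [Walk.support_map, List.map_map]; rfl
  simpa using length_support_le_mp (hp.map φ.injective) (hdeg ▸ h)

theorem length_support_le_mp_induce {s : Set V} [Fintype s] [DecidableRel (G.induce s).Adj]
    {g : V → ℕ} (hg : ∀ y (hy : y ∈ s), (G.induce s).degree ⟨y, hy⟩ = g y) {a b : V}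
    {p : G.Walk a b} (hp : p.IsPath) (hs : ∀ y ∈ p.support, y ∈ s)
    (h : (p.support.map g).IsChain (· ≤ ·) ∨ (p.support.map g).IsChain (· ≥ ·)) :
    p.support.length ≤ mp (G.induce s) := by
  have hp' : (p.induce s hs).IsPath :=
    .of_map (f := (Embedding.induce s).toHom) (by rwa [Walk.map_induce])
  have hdeg : (p.induce s hs).support.map ((G.induce s).degree ·) = p.support.map g := by
    rw [Walk.support_induce, List.map_congr_left (g := g ∘ Subtype.val) (fun y _ => hg y y.2),
      ← List.map_map, List.attachWith_map_subtype_val]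
  simpa using length_support_le_mp hp' (hdeg ▸ h)

theorem mp_le_two_mul_mp_addVertex [Fintype V] (G : SimpleGraph V) (x : V) :
    mp G ≤ 2 * mp (addVertex G {x}) := by
  classical
  have hx : G.degree x ≤ (addVertex G {x}).degree (some x) := by
    rw [degree_addVertex_some_of_mem (Set.mem_singleton x)]; omega
  have hfg : ∀ y ≠ x, (addVertex G {x}).degree (some y) = G.degree y :=
    fun y hy => degree_addVertex_some_of_notMem hy
  refine mp_le_of_forall fun a b p hp hc => hp.length_support_le_two_mul_of_eq_of_ne hfg hx hc ?_
  exact fun c d q hq _ hqc =>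
    length_support_le_mp_of_embedding (addVertexEmbedding G {x}) hq (.inl hqc)

section induceSetOfNe

variable [Fintype V] [DecidableEq V] [DecidableRel G.Adj] {u v : V}

theorem card_erase_neighborFinset_eq_degree (hu : G.neighborFinset v = {u}) {y : V}
    (hy : y ≠ u) : #((G.neighborFinset y).erase v) = G.degree y := by
  refine congrArg card (erase_eq_of_notMem fun hyv => hy ?_)
  simpa [hu] using (G.mem_neighborFinset v y).mpr ((G.mem_neighborFinset y v).mp hyv).symm

theorem one_le_mp_induce_setOf_ne (hu : G.neighborFinset v = {u}) :
    1 ≤ mp (G.induce {y | y ≠ v}) :=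
  have : Nonempty {y | y ≠ v} :=
    ⟨⟨u, (G.ne_of_adj (by simp [← mem_neighborFinset, hu])).symm⟩⟩
  one_le_mp _

theorem length_support_le_two_mul_mp_induce_of_notMem (hu : G.neighborFinset v = {u})
    {a b : V} {p : G.Walk a b} (hp : p.IsPath) (hvp : v ∉ p.support)
    (hc : (p.support.map (G.degree ·)).IsChain (· ≤ ·)) :
    p.support.length ≤ 2 * mp (G.induce {y | y ≠ v}) := by
  -- Read backwards, `p` is a `≥`-chain, and the degree of `u` drops, i.e. moves along `≥`.
  rw [← List.length_reverse, ← Walk.support_reverse]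
  refine hp.reverse.length_support_le_two_mul_of_eq_of_ne (R := (· ≥ ·))
    (fun y => card_erase_neighborFinset_eq_degree hu) card_erase_le
    (by simpa [List.isChain_reverse] using hc) fun c d q hq hsub hqc => ?_
  refine length_support_le_mp_induce (s := {y | y ≠ v}) (fun y _ => degree_induce_setOf_ne _) hq
    (fun y hy => ne_of_mem_of_not_mem (hsub hy) ?_) (.inr hqc)
  rwa [Walk.support_reverse, List.mem_reverse]

theorem length_support_le_two_mul_mp_induce_of_start (hu : G.neighborFinset v = {u}) {b : V}
    {p : G.Walk v b} (hp : p.IsPath) (hc : (p.support.map (G.degree ·)).IsChain (· ≤ ·)) :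
    p.support.length ≤ 2 * mp (G.induce {y | y ≠ v}) := by
  have h1 := one_le_mp_induce_setOf_ne hu
  cases p with
  | nil => simp only [Walk.support_nil, List.length_singleton]; omega
  | cons hvw q =>
    obtain rfl : u = _ := by simpa [hu, eq_comm] using (G.mem_neighborFinset v _).mpr hvw
    obtain ⟨hq, hvq⟩ := (Walk.cons_isPath_iff _ _).mp hp
    have huq : u ∉ q.support.tail :=
      (List.nodup_cons.mp (q.cons_tail_support ▸ hq.support_nodup)).1
    have hqc : (q.support.map fun y => #((G.neighborFinset y).erase v)).IsChain (· ≤ ·) := by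
      rw [Walk.support_cons, List.map_cons, ← q.cons_tail_support] at hc
      rw [← q.cons_tail_support]
      exact hc.tail.map_cons_of_eqOn
        (fun y hy => card_erase_neighborFinset_eq_degree hu (ne_of_mem_of_not_mem hy huq))
        card_erase_le
    have := length_support_le_mp_induce (s := {y | y ≠ v})
      (fun y _ => degree_induce_setOf_ne _) hq (fun y hy => ne_of_mem_of_not_mem hy hvq) (.inl hqc)
    have := q.support.length_pos_of_mem q.start_mem_support
    rw [Walk.support_cons, List.length_cons]
    omega

theorem mp_le_two_mul_mp_induce_ne (hv : G.degree v = 1) :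
    mp G ≤ 2 * mp (G.induce {y | y ≠ v}) := by
  obtain ⟨u, hu⟩ := card_eq_one.mp hv
  refine mp_le_of_forall fun a b p hp hc => ?_
  by_cases hvp : v ∈ p.support
  · obtain rfl | rfl := hp.eq_or_eq_of_degree_lt_two hvp (by omega)
    · exact length_support_le_two_mul_mp_induce_of_start hu hp hc
    · have hlen := hp.reverse.length_le_one_of_isChain_ge
        (by simpa [List.isChain_reverse] using hc) hv.le
      have := one_le_mp_induce_setOf_ne hu
      rw [Walk.length_reverse] at hlen
      rw [Walk.length_support]
      omega
  · exact length_support_le_two_mul_mp_induce_of_notMem hu hp hvp hc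

end induceSetOfNe

end MonotonePaths

theorem mp_tree_leaf_ge_general {V : Type*} [Fintype V] [DecidableEq V]
    (T : SimpleGraph V) [DecidableRel T.Adj]
    (x : V) (v : V) (hv : T.degree v = 1) :
    (mp T : ℚ) / 2 ≤ (mp (addVertex T {x}) : ℚ) ∧
    (mp T : ℚ) / 2 ≤ (mp (T.induce {y : V | y ≠ v}) : ℚ) := by
  have hadd := mp_le_two_mul_mp_addVertex T x
  have hdel := mp_le_two_mul_mp_induce_ne hv
  constructor <;> rw [div_le_iff₀ two_pos] <;> exact_mod_cast (by omega)

theorem mp_tree_leaf_ge {V : Type*} [Fintype V] [DecidableEq V]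
    (T : SimpleGraph V) [DecidableRel T.Adj] (hT : T.IsTree)
    (x : V) (v : V) (hv : T.degree v = 1) :
    (mp T : ℚ) / 2 ≤ (mp (addVertex T {x}) : ℚ) ∧
    (mp T : ℚ) / 2 ≤ (mp (T.induce {y : V | y ≠ v}) : ℚ) :=
  mp_tree_leaf_ge_general T x v hv
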